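/- arXiv:2511.21200 — 4 statements merged into one kernel-verified Lean document; each statement's English description precedes it below -/
import Mathlib

section
/- Let R be a local commutative ring with maximal ideal M, and n a positive integer. A proper ideal I of R is an n-OA ideal if and only if I is a prime ideal or M^n ⊆ I ⊆ M. -/
/-- A proper ideal `I` is an `n`-OA ideal (`n`-`1`-absorbing prime) if whenever a product of
`n+1` nonunits lies in `I`, then the product of the first `n` of them lies in `I` or the last
one lies in `I`. -/
def IsNOAIdeal {R : Type*} [CommRing R] (n : ℕ) (I : Ideal R) : Prop :=
  I ≠ ⊤ ∧ ∀ a : Fin (n + 1) → R, (∀ i, ¬IsUnit (a i)) → (∏ i, a i) ∈ I →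
    (∏ i : Fin n, a i.castSucc) ∈ I ∨ a (Fin.last n) ∈ I

/-- An ideal has an `n`-OA-factorization if it is a product of finitely many `n`-OA ideals. -/
def HasNOAFactorization {R : Type*} [CommRing R] (n : ℕ) (I : Ideal R) : Prop :=
  ∃ (m : ℕ) (J : Fin m → Ideal R), 0 < m ∧ (∀ i, IsNOAIdeal n (J i)) ∧ I = ∏ i, J i

/-- A ring is an `n`-OAF ring if every proper ideal has an `n`-OA-factorization. -/
def IsNOAFRing (R : Type*) [CommRing R] (n : ℕ) : Prop :=
  ∀ I : Ideal R, I ≠ ⊤ → HasNOAFactorization n I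

/-- A general ZPI-ring: every proper ideal is a finite product of prime ideals. -/
def IsGeneralZPIRing (R : Type*) [CommRing R] : Prop :=
  ∀ I : Ideal R, I ≠ ⊤ →
    ∃ (m : ℕ) (J : Fin m → Ideal R), 0 < m ∧ (∀ i, (J i).IsPrime) ∧ I = ∏ i, J i


/-
If `I` is an `n`-OA ideal that is not prime, pick nonunits `x, y ∉ I` with `x * y ∈ I`. For
nonunits `m₁, …, mₙ`, the product `m₁ ⋯ mₙ₋₁ x y` lies in `I`, so absorbing `y` gives
`m₁ ⋯ mₙ₋₁ x ∈ I`; hence `m₁ ⋯ mₙ x ∈ I`, and absorbing `x` gives `m₁ ⋯ mₙ ∈ I`. In a local ring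
the nonunits form `M`, so `Mⁿ ⊆ I`. Conversely, prime ideals are `n`-OA, and if `Mⁿ ⊆ I` then
every product of `n` nonunits already lies in `I`.
-/

open IsLocalRing

section

variable {R : Type*} [CommRing R]

theorem Ideal.pow_le_of_forall_prod_mem {M I : Ideal R} {n : ℕ}
    (h : ∀ m : Fin n → R, (∀ i, m i ∈ M) → ∏ i, m i ∈ I) : M ^ n ≤ I := by
  rw [Submodule.pow_eq_span_pow_set, Submodule.span_le]
  rintro _ hx
  obtain ⟨f, rfl⟩ := Set.mem_pow.1 hx
  rw [List.prod_ofFn]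
  exact h (fun i => f i) fun i => (f i).2

theorem Ideal.prod_mem_pow {M : Ideal R} {n : ℕ} {m : Fin n → R} (hm : ∀ i, m i ∈ M) :
    ∏ i, m i ∈ M ^ n := by
  simpa using Ideal.prod_mem_prod (s := Finset.univ) (I := fun _ => M) fun i _ => hm i

theorem Ideal.exists_not_isUnit_of_not_isPrime {I : Ideal R} (hI : I ≠ ⊤) (hp : ¬I.IsPrime) :
    ∃ x y, ¬IsUnit x ∧ ¬IsUnit y ∧ x * y ∈ I ∧ x ∉ I ∧ y ∉ I := by
  obtain ⟨x, y, hxy, hx, hy⟩ : ∃ x y, x * y ∈ I ∧ x ∉ I ∧ y ∉ I := by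
    simpa [Ideal.isPrime_iff, hI] using hp
  refine ⟨x, y, fun hu => hy ?_, fun hu => hx ?_, hxy, hx, hy⟩
  · exact (I.unit_mul_mem_iff_mem hu).1 hxy
  · exact (I.unit_mul_mem_iff_mem hu).1 (mul_comm x y ▸ hxy)

theorem IsNOAIdeal.prod_mem_or_mem {n : ℕ} {I : Ideal R} (h : IsNOAIdeal n I) {m : Fin n → R}
    (hm : ∀ i, ¬IsUnit (m i)) {b : R} (hb : ¬IsUnit b) (hmb : (∏ i, m i) * b ∈ I) :
    ∏ i, m i ∈ I ∨ b ∈ I := by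
  simpa [Fin.prod_snoc] using
    h.2 (Fin.snoc m b) (by simpa [Fin.forall_fin_succ'] using ⟨hm, hb⟩) (by simpa [Fin.prod_snoc])

theorem IsNOAIdeal.prod_mem_of_not_isPrime {n : ℕ} (hn : 0 < n) {I : Ideal R}
    (h : IsNOAIdeal n I) (hp : ¬I.IsPrime) {m : Fin n → R} (hm : ∀ i, ¬IsUnit (m i)) :
    ∏ i, m i ∈ I := by
  obtain ⟨x, y, hxu, hyu, hxy, hx, hy⟩ := Ideal.exists_not_isUnit_of_not_isPrime h.1 hp
  obtain ⟨k, rfl⟩ : ∃ k, n = k + 1 := Nat.exists_eq_add_one.2 hn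
  set p := ∏ i : Fin k, m i.castSucc
  have hpx : p * x ∈ I := by
    have hsnoc : ∀ i, ¬IsUnit (Fin.snoc (α := fun _ => R) (fun i => m i.castSucc) x i) := by
      simpa [Fin.forall_fin_succ'] using ⟨fun i => hm _, hxu⟩
    have hpxy : (p * x) * y ∈ I := mul_assoc p x y ▸ I.mul_mem_left p hxy
    simpa [Fin.prod_snoc, hy] using h.prod_mem_or_mem hsnoc hyu (by simpa [Fin.prod_snoc])
  have hmx : (∏ i, m i) * x ∈ I := by
    rw [Fin.prod_univ_castSucc, mul_right_comm]
    exact I.mul_mem_right _ hpx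
  exact (h.prod_mem_or_mem hm hxu hmx).resolve_right hx

theorem Ideal.IsPrime.isNOAIdeal {I : Ideal R} (hp : I.IsPrime) (n : ℕ) : IsNOAIdeal n I :=
  ⟨hp.ne_top, fun a _ ha => hp.mem_or_mem (Fin.prod_univ_castSucc a ▸ ha)⟩

section IsLocalRing

variable [IsLocalRing R]

theorem IsNOAIdeal.pow_maximalIdeal_le {n : ℕ} (hn : 0 < n) {I : Ideal R} (h : IsNOAIdeal n I)
    (hp : ¬I.IsPrime) : maximalIdeal R ^ n ≤ I :=
  Ideal.pow_le_of_forall_prod_mem fun _ hm =>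
    h.prod_mem_of_not_isPrime hn hp fun i => (mem_maximalIdeal _).1 (hm i)

theorem isNOAIdeal_of_pow_maximalIdeal_le {n : ℕ} {I : Ideal R} (hI : I ≠ ⊤)
    (h : maximalIdeal R ^ n ≤ I) : IsNOAIdeal n I :=
  ⟨hI, fun _ ha _ => Or.inl <| h <| Ideal.prod_mem_pow fun _ => (mem_maximalIdeal _).2 (ha _)⟩

end IsLocalRing

end

theorem stmt1 {R : Type*} [CommRing R] [IsLocalRing R] (n : ℕ) (hn : 0 < n)
    (I : Ideal R) (hI : I ≠ ⊤) :
    IsNOAIdeal n I ↔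
      (I.IsPrime ∨ ((IsLocalRing.maximalIdeal R) ^ n ≤ I ∧ I ≤ IsLocalRing.maximalIdeal R)) := by
  constructor
  · intro h
    by_cases hp : I.IsPrime
    · exact Or.inl hp
    · exact Or.inr ⟨h.pow_maximalIdeal_le hn hp, le_maximalIdeal hI⟩
  · rintro (hp | ⟨hMn, -⟩)
    · exact hp.isNOAIdeal n
    · exact isNOAIdeal_of_pow_maximalIdeal_le hI hMn
end

section
/- Let R be a local commutative ring with maximal ideal M and nilradical Nil(R). If every proper principal ideal of R has an n-OA-factorization, then every proper principal ideal of R/Nil(R) has an n-OA-factorization. -/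
/-!
An `n`-OA ideal `I` with `n > 0` either contains every product of `n` nonunits, or is prime
(absorb `a b ∈ I` through the product of `n` nonunits that misses `I`). In both cases
`I ⊔ nilradical R` is again `n`-OA, and it is the preimage of the image of `I` in
`R ⧸ nilradical R`; since nonunits lift to nonunits, that image is `n`-OA. Images of ideals
commute with finite products, so an `n`-OA-factorization of `(x)` maps to one of `(x̄)`.
-/

open Ideal

namespace IsNOAIdeal

variable {R : Type*} [CommRing R] {n : ℕ} {I : Ideal R}

theorem prod_mem_or_mem_s5 (hI : IsNOAIdeal n I) {a : Fin n → R} {b : R}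
    (ha : ∀ i, ¬IsUnit (a i)) (hb : ¬IsUnit b) (hab : (∏ i, a i) * b ∈ I) :
    (∏ i, a i) ∈ I ∨ b ∈ I := by
  simpa [Fin.snoc_castSucc, Fin.snoc_last] using
    hI.2 (Fin.snoc a b) (by simpa [Fin.forall_fin_succ'] using ⟨ha, hb⟩)
      (by simpa [Fin.prod_snoc] using hab)

theorem isPrime_of_prod_notMem (hn : 0 < n) (hI : IsNOAIdeal n I) {c : Fin n → R}
    (hc : ∀ i, ¬IsUnit (c i)) (hcI : (∏ i, c i) ∉ I) : I.IsPrime := by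
  obtain ⟨m, rfl⟩ := Nat.exists_eq_add_one_of_ne_zero hn.ne'
  refine ⟨hI.1, fun {a b} hab => ?_⟩
  by_cases ha : IsUnit a
  · exact Or.inr ((I.unit_mul_mem_iff_mem ha).1 hab)
  by_cases hb : IsUnit b
  · exact Or.inl ((I.mul_unit_mem_iff_mem hb).1 hab)
  set c' : Fin m → R := fun i => c i.castSucc
  have hc' : ∀ i, ¬IsUnit ((Fin.snoc c' a : Fin (m + 1) → R) i) := by
    simpa [Fin.forall_fin_succ'] using ⟨fun i => hc i.castSucc, ha⟩
  have hc'ab : (∏ i, (Fin.snoc c' a : Fin (m + 1) → R) i) * b ∈ I := by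
    rw [Fin.prod_snoc, mul_assoc, mul_comm]
    exact I.mul_mem_right _ hab
  refine (hI.prod_mem_or_mem_s5 hc' hb hc'ab).imp_left fun hc'a => ?_
  rw [Fin.prod_snoc] at hc'a
  have hca : (∏ i, c i) * a ∈ I := by
    rw [Fin.prod_univ_castSucc, mul_right_comm, mul_comm]
    exact I.mul_mem_left _ hc'a
  exact (hI.prod_mem_or_mem_s5 hc ha hca).resolve_left hcI

theorem sup_of_le_nilradical (hn : 0 < n) (hI : IsNOAIdeal n I) {K : Ideal R}
    (hK : K ≤ nilradical R) : IsNOAIdeal n (I ⊔ K) := by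
  by_cases hprod : ∀ c : Fin n → R, (∀ i, ¬IsUnit (c i)) → (∏ i, c i) ∈ I
  · obtain ⟨M, hM, hIM⟩ := I.exists_le_maximal hI.1
    refine ⟨ne_top_of_le_ne_top hM.ne_top (sup_le hIM (hK.trans (nilradical_le_prime M))), ?_⟩
    exact fun a ha _ => Or.inl (mem_sup_left (hprod _ fun i => ha i.castSucc))
  · push Not at hprod
    obtain ⟨c, hc, hcI⟩ := hprod
    have := hI.isPrime_of_prod_notMem hn hc hcI
    rwa [sup_eq_left.2 (hK.trans (nilradical_le_prime I))]

variable {S : Type*} [CommRing S] {f : R →+* S}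

theorem of_comap (hf : Function.Surjective f) {K : Ideal S} (hK : IsNOAIdeal n (K.comap f)) :
    IsNOAIdeal n K := by
  refine ⟨fun htop => hK.1 (by rw [htop, comap_top]), fun a ha hprod => ?_⟩
  choose b hb using fun i => hf (a i)
  have hb' : ∀ i, ¬IsUnit (b i) := fun i hu => ha i (hb i ▸ hu.map f)
  have hbprod : (∏ i, b i) ∈ K.comap f := by simpa [mem_comap, map_prod, hb] using hprod
  simpa [mem_comap, map_prod, hb] using hK.2 b hb' hbprod

theorem map_of_surjective (hn : 0 < n) (hf : Function.Surjective f)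
    (hker : RingHom.ker f ≤ nilradical R) (hI : IsNOAIdeal n I) : IsNOAIdeal n (I.map f) := by
  refine of_comap hf ?_
  rw [comap_map_of_surjective _ hf, ← RingHom.ker_eq_comap_bot]
  exact hI.sup_of_le_nilradical hn hker

end IsNOAIdeal

theorem stmt5_general {R : Type*} [CommRing R] (n : ℕ) (hn : 0 < n)
    (h : ∀ x : R, Ideal.span {x} ≠ ⊤ → HasNOAFactorization n (Ideal.span {x})) :
    ∀ y : R ⧸ nilradical R, Ideal.span {y} ≠ ⊤ → HasNOAFactorization n (Ideal.span {y}) := by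
  intro y hy
  set π := Ideal.Quotient.mk (nilradical R)
  obtain ⟨x, rfl⟩ := Ideal.Quotient.mk_surjective y
  have hspan : span {π x} = (span {x}).map π := by rw [map_span, Set.image_singleton]
  have hx : span {x} ≠ ⊤ := fun htop => hy (by rw [hspan, htop, Ideal.map_top])
  obtain ⟨m, J, hm, hJ, hxJ⟩ := h x hx
  refine ⟨m, fun i => (J i).map π, hm,
    fun i => (hJ i).map_of_surjective hn Ideal.Quotient.mk_surjective mk_ker.le, ?_⟩
  rw [hspan, hxJ]
  exact map_prod (mapHom π) J Finset.univ

theorem stmt5 {R : Type*} [CommRing R] [IsLocalRing R] (n : ℕ) (hn : 0 < n)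
    (h : ∀ x : R, Ideal.span {x} ≠ ⊤ → HasNOAFactorization n (Ideal.span {x})) :
    ∀ y : R ⧸ nilradical R, Ideal.span {y} ≠ ⊤ → HasNOAFactorization n (Ideal.span {y}) :=
  stmt5_general n hn h
end

section
/- Let R be a local commutative ring with Krull dimension at least 2 such that every proper principal ideal of R has an n-OA-factorization. Then R is a unique factorization domain. -/
/-!
A non-prime `n`-OA ideal contains every product of `n` nonunits, so in a local ring an `n`-OA
ideal inside a non-maximal prime is prime; in particular the minimal primes are among the
factors of `(0)`. In a local ring a factor `I` of a principal ideal `(x)` contains a divisor `a`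
of `x` with `I ⊆ (a) + Ann x`; if `x` avoids the minimal primes, `I ⊆ (a) + N`, where `N` is the
nilradical.

Since `dim R ≥ 2`, some prime is neither minimal nor maximal; factoring an element of it that
avoids the minimal primes gives `y` with `(y) + N` a non-maximal prime. Let `I ⊆ (a) + N` be a
factor of some `(x)` with `x` avoiding the minimal primes. If `a ∈ (y) + N`, then `I` lies in
that non-maximal prime, so `I` is prime. Otherwise, were `I` not prime, it would contain `y ^ n`,
and since `(y) + N` is prime, `y ^ k ∈ (a) + N` descends to `y ^ (k - 1) ∈ (a) + N`, making `a`
a unit. So all these factors are prime. If a minimal prime `P = (a) + N` differed from `N`, the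
prime factor of `a + t`, with `t` in all other minimal primes, would put `a` in `(w) + N` for a
nonunit `w ∉ P`, and Nakayama for `P / N` gives `P = N`. So `N` is prime, the factor of `(y)`
inside `(y) + N` is all of `(y)`, and `N = y N`; for `η ∈ N` the factorization `(η) = N K` then
gives `(η) = y (η)`, so `N = 0`. In the resulting local domain every nonzero prime contains a
prime element, which is Kaplansky's criterion for factoriality.
-/

section

open IsLocalRing Ideal

variable {R : Type*} [CommRing R] {n : ℕ}

namespace IsNOAIdeal

theorem mem_or_mem {J : Ideal R} (hJ : IsNOAIdeal n J) {c : Fin n → R}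
    (hc : ∀ i, ¬IsUnit (c i)) {a : R} (ha : ¬IsUnit a) (h : (∏ i, c i) * a ∈ J) :
    ∏ i, c i ∈ J ∨ a ∈ J := by
  have hsnoc : ∀ i, ¬IsUnit ((Fin.snoc c a : Fin (n + 1) → R) i) :=
    Fin.lastCases (by simpa using ha) fun i => by simpa using hc i
  simpa using hJ.2 (Fin.snoc c a) hsnoc (by simpa [Fin.prod_univ_castSucc] using h)

theorem prod_mem_of_not_isPrime_s8 (hn : 0 < n) {J : Ideal R} (hJ : IsNOAIdeal n J)
    (hJp : ¬J.IsPrime) {c : Fin n → R} (hc : ∀ i, ¬IsUnit (c i)) : ∏ i, c i ∈ J := by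
  obtain ⟨a, b, hab, ha, hb⟩ : ∃ a b, a * b ∈ J ∧ a ∉ J ∧ b ∉ J := by
    by_contra! H
    exact hJp ⟨hJ.1, fun {a b} hab => or_iff_not_imp_left.mpr (H a b hab)⟩
  have hau : ¬IsUnit a := fun hu => hb ((J.unit_mul_mem_iff_mem hu).mp hab)
  have hbu : ¬IsUnit b := fun hu => ha ((J.mul_unit_mem_iff_mem hu).mp hab)
  obtain ⟨k, rfl⟩ : ∃ k, n = k + 1 := ⟨n - 1, by omega⟩
  have hcons : ∀ i, ¬IsUnit ((Fin.cons a (Fin.tail c) : Fin (k + 1) → R) i) :=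
    Fin.cases hau fun i => hc i.succ
  have hac : a * ∏ i : Fin k, c i.succ ∈ J := by
    have := hJ.mem_or_mem hcons hbu
      (by simpa [Fin.prod_univ_succ, Fin.tail, mul_right_comm] using J.mul_mem_right _ hab)
    simpa [Fin.prod_univ_succ, Fin.tail, hb] using this
  refine (hJ.mem_or_mem hc hau ?_).resolve_right ha
  rw [Fin.prod_univ_succ, mul_right_comm, mul_assoc]
  exact J.mul_mem_left _ hac

theorem pow_mem_of_not_isPrime (hn : 0 < n) {J : Ideal R} (hJ : IsNOAIdeal n J)
    (hJp : ¬J.IsPrime) {c : R} (hc : ¬IsUnit c) : c ^ n ∈ J := by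
  simpa using hJ.prod_mem_of_not_isPrime_s8 hn hJp (c := fun _ => c) fun _ => hc

theorem isPrime_of_le [IsLocalRing R] (hn : 0 < n) {J P : Ideal R} (hJ : IsNOAIdeal n J)
    (hP : P.IsPrime) (hPm : P ≠ maximalIdeal R) (hJP : J ≤ P) : J.IsPrime := by
  by_contra hJp
  obtain ⟨c, hcm, hcP⟩ := SetLike.exists_of_lt ((le_maximalIdeal hP.ne_top).lt_of_ne hPm)
  exact hcP (hP.mem_of_pow_mem n (hJP (hJ.pow_mem_of_not_isPrime hn hJp hcm)))

theorem eq_of_le_of_mem_minimalPrimes [IsLocalRing R] (hn : 0 < n) {J Q : Ideal R}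
    (hJ : IsNOAIdeal n J) (hm : maximalIdeal R ∉ minimalPrimes R) (hQ : Q ∈ minimalPrimes R)
    (hJQ : J ≤ Q) : J = Q :=
  le_antisymm hJQ <|
    hQ.2 ⟨hJ.isPrime_of_le hn hQ.1.1 (fun h => hm (h ▸ hQ)) hJQ, bot_le⟩ hJQ

end IsNOAIdeal

theorem nilradical_eq_sInf_minimalPrimes : nilradical R = sInf (minimalPrimes R) :=
  (Ideal.sInf_minimalPrimes (I := ⊥)).symm

theorem mem_nilradical_iff_forall_mem_minimalPrimes {x : R} :
    x ∈ nilradical R ↔ ∀ Q ∈ minimalPrimes R, x ∈ Q := by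
  rw [nilradical_eq_sInf_minimalPrimes, Submodule.mem_sInf]

theorem notMem_nilradical_of_forall_notMem_minimalPrimes [Nontrivial R] {x : R}
    (hx : ∀ Q ∈ minimalPrimes R, x ∉ Q) : x ∉ nilradical R := fun h => by
  obtain ⟨M, hM⟩ := Ideal.exists_maximal R
  obtain ⟨Q, hQ, -⟩ := Ideal.exists_minimalPrimes_le (bot_le : ⊥ ≤ M)
  exact hx Q hQ (mem_nilradical_iff_forall_mem_minimalPrimes.mp h Q hQ)

theorem ne_zero_of_forall_notMem_minimalPrimes [Nontrivial R] {x : R}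
    (hx : ∀ Q ∈ minimalPrimes R, x ∉ Q) : x ≠ 0 := fun h =>
  notMem_nilradical_of_forall_notMem_minimalPrimes hx (h ▸ zero_mem _)

theorem mem_nilradical_of_mul_mem {x a : R} (hx : ∀ Q ∈ minimalPrimes R, x ∉ Q)
    (h : x * a ∈ nilradical R) : a ∈ nilradical R :=
  mem_nilradical_iff_forall_mem_minimalPrimes.mpr fun Q hQ =>
    (hQ.1.1.mem_or_mem (mem_nilradical_iff_forall_mem_minimalPrimes.mp h Q hQ)).resolve_left
      (hx Q hQ)

theorem exists_mem_forall_notMem_of_finite {S : Set (Ideal R)} (hS : S.Finite)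
    (hSp : ∀ Q ∈ S, Q.IsPrime) {I : Ideal R} (hI : ∀ Q ∈ S, ¬I ≤ Q) :
    ∃ x ∈ I, ∀ Q ∈ S, x ∉ Q := by
  have := mt (subset_union_prime_finite hS (f := id) ⊥ ⊥ fun Q hQ _ _ => hSp Q hQ).mp
    (by simpa using hI)
  simpa [Set.subset_def] using this

theorem sInf_not_le_of_finite {S : Set (Ideal R)} (hS : S.Finite) {P : Ideal R}
    (hP : P.IsPrime) (h : ∀ Q ∈ S, ¬Q ≤ P) : ¬sInf S ≤ P := by
  rw [← hS.coe_toFinset, ← Finset.inf_id_eq_sInf, hP.inf_le']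
  simpa using h

namespace IsLocalRing

variable [IsLocalRing R]

theorem mem_of_mem_maximalIdeal_mul_span_singleton_sup {I : Ideal R} {y : R}
    (h : y ∈ maximalIdeal R * span {y} ⊔ I) : y ∈ I := by
  obtain ⟨u, hu, v, hv, huv⟩ := Submodule.mem_sup.mp h
  obtain ⟨z, hz, rfl⟩ := mem_mul_span_singleton.mp hu
  refine (I.unit_mul_mem_iff_mem (isUnit_one_sub_self_of_mem_nonunits z hz)).mp ?_
  rwa [show (1 - z) * y = v by linear_combination -huv]

theorem maximalIdeal_notMem_minimalPrimes_of_ne {p : Ideal R} (hp : p.IsPrime)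
    (hpm : p ≠ maximalIdeal R) : maximalIdeal R ∉ minimalPrimes R := fun hm =>
  hpm (le_antisymm (le_maximalIdeal hp.ne_top) (hm.2 ⟨hp, bot_le⟩ (le_maximalIdeal hp.ne_top)))

theorem exists_mul_eq_of_mul_eq_span_singleton {I K : Ideal R} {x : R} (hx : x ≠ 0)
    (h : I * K = span {x}) : ∃ a ∈ I, ∃ b ∈ K, a * b = x := by
  by_contra! H
  have hle : I * K ≤ maximalIdeal R * span {x} := Ideal.mul_le.mpr fun a ha b hb => by
    obtain ⟨t, ht⟩ := mem_span_singleton'.mp (h ▸ mul_mem_mul ha hb)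
    refine ht ▸ mul_mem_mul ((mem_maximalIdeal t).mpr fun hu => ?_) (mem_span_singleton_self x)
    refine H a ha (b * ↑hu.unit⁻¹) (K.mul_mem_right _ hb) ?_
    rw [← mul_assoc, ← ht, mul_comm t, mul_assoc, hu.mul_val_inv, mul_one]
  refine hx ((Submodule.mem_bot R).mp (mem_of_mem_maximalIdeal_mul_span_singleton_sup ?_))
  exact mem_sup_left (hle (h ▸ mem_span_singleton_self x))

theorem exists_dvd_le_span_singleton_sup_nilradical {I K : Ideal R} {x : R} (hx0 : x ≠ 0)
    (hx : ∀ Q ∈ minimalPrimes R, x ∈ Q → I ≤ Q) (h : I * K = span {x}) :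
    ∃ a ∈ I, a ∣ x ∧ I ≤ span {a} ⊔ nilradical R := by
  obtain ⟨a, ha, b, hb, rfl⟩ := exists_mul_eq_of_mul_eq_span_singleton hx0 h
  refine ⟨a, ha, dvd_mul_right a b, fun c hc => ?_⟩
  obtain ⟨g, hg⟩ := mem_span_singleton'.mp (h ▸ mul_mem_mul hc hb)
  have hη : (c - g * a) * (a * b) = 0 := by linear_combination (-a) * hg
  refine mem_span_singleton_sup.mpr ⟨g, c - g * a, ?_, by ring⟩
  refine mem_nilradical_iff_forall_mem_minimalPrimes.mpr fun Q hQ => ?_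
  refine (hQ.1.1.mem_or_mem (hη ▸ Q.zero_mem)).elim id fun hxQ => hx Q hQ hxQ ?_
  exact I.sub_mem hc (I.mul_mem_left g ha)

theorem exists_dvd_le_span_singleton_sup_nilradical_of_forall_notMem {I K : Ideal R} {x : R}
    (hx : ∀ Q ∈ minimalPrimes R, x ∉ Q) (h : I * K = span {x}) :
    ∃ a ∈ I, a ∣ x ∧ I ≤ span {a} ⊔ nilradical R :=
  exists_dvd_le_span_singleton_sup_nilradical (ne_zero_of_forall_notMem_minimalPrimes hx)
    (fun Q hQ hxQ => absurd hxQ (hx Q hQ)) h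

theorem mem_nilradical_of_le_span_singleton_sup {P : Ideal R} (hP : P.IsPrime) {a w : R}
    (hPa : P ≤ span {a} ⊔ nilradical R) (haP : a ∈ P) (hw : w ∈ maximalIdeal R)
    (hwP : w ∉ P)
    (haw : a ∈ span {w} ⊔ nilradical R) : a ∈ nilradical R := by
  have := hP
  obtain ⟨g, η, hη, hg⟩ := mem_span_singleton_sup.mp haw
  have hgP : g ∈ P := by
    refine (hP.mem_or_mem ?_).resolve_right hwP
    rw [show g * w = a - η by rw [← hg]; ring]
    exact P.sub_mem haP (nilradical_le_prime P hη)
  obtain ⟨g', η', hη', hg'⟩ := mem_span_singleton_sup.mp (hPa hgP)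
  refine mem_of_mem_maximalIdeal_mul_span_singleton_sup (Submodule.mem_sup.mpr
    ⟨g' * w * a, mul_mem_mul ((maximalIdeal R).mul_mem_left g' hw) (mem_span_singleton_self a),
      η' * w + η, add_mem ((nilradical R).mul_mem_right w hη') hη, ?_⟩)
  linear_combination hg + w * hg'

end IsLocalRing

theorem isUnit_of_pow_mem_span_singleton_sup_nilradical {y z : R}
    (hy : ∀ Q ∈ minimalPrimes R, y ∉ Q) (hq : (span {y} ⊔ nilradical R).IsPrime)
    (hz : z ∉ span {y} ⊔ nilradical R) {k : ℕ} (hk : y ^ k ∈ span {z} ⊔ nilradical R) :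
    IsUnit z := by
  induction k with
  | zero =>
    obtain ⟨g, η, hη, h1⟩ := mem_span_singleton_sup.mp hk
    rw [pow_zero, ← eq_sub_iff_add_eq] at h1
    exact isUnit_of_mul_isUnit_right (h1 ▸ (mem_nilradical.mp hη).isUnit_one_sub)
  | succ k ih =>
    obtain ⟨g, η, hη, hg⟩ := mem_span_singleton_sup.mp hk
    have hgq : g ∈ span {y} ⊔ nilradical R := by
      refine (hq.mem_or_mem ?_).resolve_right hz
      rw [show g * z = y ^ (k + 1) - η by rw [← hg]; ring]
      exact sub_mem (mem_sup_left (mem_span_singleton.mpr (dvd_pow_self y k.succ_ne_zero)))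
        (mem_sup_right hη)
    obtain ⟨g', η', hη', hg'⟩ := mem_span_singleton_sup.mp hgq
    refine ih (mem_span_singleton_sup.mpr ⟨g', y ^ k - g' * z, ?_, by ring⟩)
    refine mem_nilradical_of_mul_mem hy ?_
    rw [show y * (y ^ k - g' * z) = η + η' * z by linear_combination -hg - z * hg']
    exact add_mem hη ((nilradical R).mul_mem_right z hη')

theorem exists_isNOAIdeal_mul_eq_span_singleton_le
    (hH : ∀ x : R, span {x} ≠ ⊤ → HasNOAFactorization n (span {x})) {x : R}
    (hx : ¬IsUnit x) {P : Ideal R} (hP : P.IsPrime) (hxP : x ∈ P) :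
    ∃ J K : Ideal R, IsNOAIdeal n J ∧ J * K = span {x} ∧ J ≤ P := by
  obtain ⟨r, J, -, hJ, hxJ⟩ := hH x (by rwa [Ne, span_singleton_eq_top])
  obtain ⟨i, -, hi⟩ := hP.prod_le.mp (hxJ ▸ (span_singleton_le_iff_mem P).mpr hxP)
  refine ⟨J i, ∏ j ∈ Finset.univ.erase i, J j, hJ i, ?_, hi⟩
  rw [Finset.mul_prod_erase _ _ (Finset.mem_univ i), hxJ]

section IsLocalRing

variable [IsLocalRing R]

theorem exists_isPrime_notMem_minimalPrimes_ne_maximalIdeal (hdim : 2 ≤ ringKrullDim R) :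
    ∃ p : Ideal R, p.IsPrime ∧ p ∉ minimalPrimes R ∧ p ≠ maximalIdeal R := by
  obtain ⟨l, hl⟩ := Order.le_krullDim_iff.mp
    (by exact_mod_cast hdim : ((2 : ℕ) : WithBot ℕ∞) ≤ ringKrullDim R)
  have h01 := l.step ⟨0, by omega⟩
  have h12 : l.toFun (Fin.castSucc ⟨1, _⟩) < l.toFun (Fin.succ ⟨1, _⟩) :=
    l.step ⟨1, by omega⟩
  refine ⟨_, (l.toFun (Fin.castSucc ⟨1, by omega⟩)).isPrime, fun hmin => ?_, fun hm => ?_⟩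
  · exact h01.not_ge (hmin.2 ⟨(l.toFun _).isPrime, bot_le⟩ h01.le)
  · exact h12.not_ge ((le_maximalIdeal (l.toFun _).isPrime.ne_top).trans_eq hm.symm)

theorem minimalPrimes_finite (hn : 0 < n)
    (hH : ∀ x : R, span {x} ≠ ⊤ → HasNOAFactorization n (span {x}))
    (hm : maximalIdeal R ∉ minimalPrimes R) : (minimalPrimes R).Finite := by
  obtain ⟨r, J, -, hJ, h0⟩ := hH 0 (by simp)
  refine (Set.finite_range J).subset fun Q hQ => ?_
  obtain ⟨i, -, hi⟩ :=
    hQ.1.1.prod_le.mp (by rw [← h0, span_singleton_eq_bot.mpr rfl]; exact bot_le)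
  exact ⟨i, (hJ i).eq_of_le_of_mem_minimalPrimes hn hm hQ hi⟩

theorem exists_span_singleton_sup_nilradical_isPrime (hn : 0 < n)
    (hH : ∀ x : R, span {x} ≠ ⊤ → HasNOAFactorization n (span {x}))
    (hm : maximalIdeal R ∉ minimalPrimes R) {p : Ideal R} (hp : p.IsPrime)
    (hpmin : p ∉ minimalPrimes R) (hpm : p ≠ maximalIdeal R) :
    ∃ y : R, (∀ Q ∈ minimalPrimes R, y ∉ Q) ∧ (span {y} ⊔ nilradical R).IsPrime ∧
      span {y} ⊔ nilradical R ≠ maximalIdeal R := by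
  obtain ⟨d, hdp, hd⟩ := exists_mem_forall_notMem_of_finite (minimalPrimes_finite hn hH hm)
    (fun Q hQ => hQ.1.1) fun Q hQ hpQ => hpmin (le_antisymm (hQ.2 ⟨hp, bot_le⟩ hpQ) hpQ ▸ hQ)
  obtain ⟨J, K, hJ, hJK, hJp⟩ := exists_isNOAIdeal_mul_eq_span_singleton_le hH
    (fun hu => hp.ne_top (eq_top_of_isUnit_mem p hdp hu)) hp hdp
  have hJprime := hJ.isPrime_of_le hn hp hpm hJp
  obtain ⟨a, haJ, ⟨b, rfl⟩, hJa⟩ :=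
    exists_dvd_le_span_singleton_sup_nilradical_of_forall_notMem hd hJK
  have hJeq : span {a} ⊔ nilradical R = J :=
    le_antisymm (sup_le ((span_singleton_le_iff_mem J).mpr haJ) (nilradical_le_prime J)) hJa
  refine ⟨a, fun Q hQ haQ => hd Q hQ (Q.mul_mem_right b haQ), hJeq ▸ hJprime, hJeq ▸ ?_⟩
  exact (hJp.trans_lt ((le_maximalIdeal hp.ne_top).lt_of_ne hpm)).ne

theorem IsNOAIdeal.isPrime_of_mul_eq_span_singleton (hn : 0 < n) {y : R}
    (hy : ∀ Q ∈ minimalPrimes R, y ∉ Q) (hq : (span {y} ⊔ nilradical R).IsPrime)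
    (hqm : span {y} ⊔ nilradical R ≠ maximalIdeal R) {J K : Ideal R} {x : R}
    (hJ : IsNOAIdeal n J) (hx : ∀ Q ∈ minimalPrimes R, x ∉ Q) (h : J * K = span {x}) :
    J.IsPrime := by
  obtain ⟨a, haJ, -, hJa⟩ := exists_dvd_le_span_singleton_sup_nilradical_of_forall_notMem hx h
  by_cases ha : a ∈ span {y} ⊔ nilradical R
  · exact hJ.isPrime_of_le hn hq hqm
      (hJa.trans (sup_le ((span_singleton_le_iff_mem _).mpr ha) le_sup_right))
  · by_contra hJp
    have hyu : ¬IsUnit y := fun hu =>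
      hq.ne_top (eq_top_of_isUnit_mem _ (mem_sup_left (mem_span_singleton_self y)) hu)
    refine hJ.1 (eq_top_of_isUnit_mem J haJ ?_)
    exact isUnit_of_pow_mem_span_singleton_sup_nilradical hy hq ha
      (hJa (hJ.pow_mem_of_not_isPrime hn hJp hyu))

theorem exists_le_span_singleton_sup_nilradical_of_mem_minimalPrimes (hn : 0 < n)
    (hH : ∀ x : R, span {x} ≠ ⊤ → HasNOAFactorization n (span {x}))
    (hm : maximalIdeal R ∉ minimalPrimes R) {P : Ideal R} (hP : P ∈ minimalPrimes R)
    (hPN : ¬P ≤ nilradical R) :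
    ∃ a ∈ P, (∀ Q ∈ minimalPrimes R, Q ≠ P → a ∉ Q) ∧
      P ≤ span {a} ⊔ nilradical R := by
  obtain ⟨s, hsP, hs⟩ := exists_mem_forall_notMem_of_finite
    ((minimalPrimes_finite hn hH hm).sdiff (t := {P})) (fun Q hQ => hQ.1.1.1)
    fun Q hQ hPQ => hQ.2 (le_antisymm (hQ.1.2 ⟨hP.1.1, bot_le⟩ hPQ) hPQ)
  obtain ⟨Q', hQ', hPQ'⟩ : ∃ Q' ∈ minimalPrimes R, ¬P ≤ Q' := by
    rw [nilradical_eq_sInf_minimalPrimes, le_sInf_iff] at hPN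
    push Not at hPN
    exact hPN
  have hs0 : s ≠ 0 := fun h => hs Q' ⟨hQ', fun h' => hPQ' (h' ▸ le_rfl)⟩ (h ▸ Q'.zero_mem)
  obtain ⟨J, K, hJ, hJK, hJP⟩ := exists_isNOAIdeal_mul_eq_span_singleton_le hH
    (fun hu => hP.1.1.ne_top (eq_top_of_isUnit_mem P hsP hu)) hP.1.1 hsP
  obtain rfl := hJ.eq_of_le_of_mem_minimalPrimes hn hm hP hJP
  obtain ⟨a, haP, ⟨b, rfl⟩, hPa⟩ := exists_dvd_le_span_singleton_sup_nilradical hs0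
    (fun Q hQ hsQ => by_contra fun hJQ => hs Q ⟨hQ, fun h => hJQ (h ▸ le_rfl)⟩ hsQ) hJK
  exact ⟨a, haP, fun Q hQ hQP haQ => hs Q ⟨hQ, hQP⟩ (Q.mul_mem_right b haQ), hPa⟩

theorem exists_mem_maximalIdeal_forall_mem_minimalPrimes_ne (hn : 0 < n)
    (hH : ∀ x : R, span {x} ≠ ⊤ → HasNOAFactorization n (span {x}))
    (hm : maximalIdeal R ∉ minimalPrimes R) {P : Ideal R} (hP : P ∈ minimalPrimes R) :
    ∃ t ∈ maximalIdeal R, t ∉ P ∧ ∀ Q ∈ minimalPrimes R, Q ≠ P → t ∈ Q := by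
  obtain ⟨t, ht, htP⟩ := SetLike.not_le_iff_exists.mp <|
    sInf_not_le_of_finite ((minimalPrimes_finite hn hH hm).sdiff (t := {P})) hP.1.1
      fun Q hQ hQP => hQ.2 (le_antisymm hQP (hP.2 ⟨hQ.1.1.1, bot_le⟩ hQP))
  obtain ⟨c, hcm, hcP⟩ := SetLike.exists_of_lt
    ((le_maximalIdeal hP.1.1.ne_top).lt_of_ne fun h => hm (h ▸ hP))
  refine ⟨t * c, mul_mem_left _ t hcm, fun h => (hP.1.1.mem_or_mem h).elim htP hcP,
    fun Q hQ hQP => mul_mem_right c Q (Submodule.mem_sInf.mp ht Q ⟨hQ, hQP⟩)⟩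

theorem nilradical_isPrime (hn : 0 < n)
    (hH : ∀ x : R, span {x} ≠ ⊤ → HasNOAFactorization n (span {x}))
    (hm : maximalIdeal R ∉ minimalPrimes R) {y : R} (hy : ∀ Q ∈ minimalPrimes R, y ∉ Q)
    (hq : (span {y} ⊔ nilradical R).IsPrime)
    (hqm : span {y} ⊔ nilradical R ≠ maximalIdeal R) :
    (nilradical R).IsPrime := by
  obtain ⟨P, hP, -⟩ := exists_minimalPrimes_le (bot_le : ⊥ ≤ maximalIdeal R)
  have := hP.1.1
  by_cases hPN : P ≤ nilradical R
  · rwa [← le_antisymm hPN (nilradical_le_prime P)]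
  exfalso
  obtain ⟨a, haP, ha, hPa⟩ :=
    exists_le_span_singleton_sup_nilradical_of_mem_minimalPrimes hn hH hm hP hPN
  obtain ⟨t, htm, htP, ht⟩ := exists_mem_maximalIdeal_forall_mem_minimalPrimes_ne hn hH hm hP
  have hat : ∀ Q ∈ minimalPrimes R, a + t ∉ Q ∧ a * t ∈ Q := by
    intro Q hQ
    by_cases hQP : Q = P
    · subst hQP
      exact ⟨fun h => htP (by simpa using Q.sub_mem h haP), Q.mul_mem_right t haP⟩
    · exact ⟨fun h => ha Q hQ hQP (by simpa using Q.sub_mem h (ht Q hQ hQP)),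
        Q.mul_mem_left a (ht Q hQ hQP)⟩
  have hζm : a + t ∈ maximalIdeal R := add_mem (le_maximalIdeal hP.1.1.ne_top haP) htm
  obtain ⟨J, K, hJ, hJK, -⟩ := exists_isNOAIdeal_mul_eq_span_singleton_le hH hζm
    (maximalIdeal.isMaximal R).isPrime hζm
  have hζ : ∀ Q ∈ minimalPrimes R, a + t ∉ Q := fun Q hQ => (hat Q hQ).1
  have hJp := hJ.isPrime_of_mul_eq_span_singleton hn hy hq hqm hζ hJK
  obtain ⟨w, hwJ, ⟨c, hc⟩, hJw⟩ :=
    exists_dvd_le_span_singleton_sup_nilradical_of_forall_notMem hζ hJK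
  have haJ : a ∈ J := by
    refine hJp.mem_of_pow_mem 2 ?_
    rw [show a ^ 2 = a * (a + t) - a * t by ring]
    have hζJ : a + t ∈ J := mul_le_left (by rw [hJK]; exact mem_span_singleton_self _)
    exact J.sub_mem (J.mul_mem_left a hζJ) (nilradical_le_prime J
      (mem_nilradical_iff_forall_mem_minimalPrimes.mpr fun Q hQ => (hat Q hQ).2))
  have haN := mem_nilradical_of_le_span_singleton_sup hP.1.1 hPa haP
    (le_maximalIdeal hJp.ne_top hwJ) (fun hwP => hζ P hP (hc ▸ P.mul_mem_right c hwP))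
    (hJw haJ)
  exact hPN (hPa.trans (sup_le ((span_singleton_le_iff_mem _).mpr haN) le_rfl))

theorem nilradical_eq_bot (hn : 0 < n)
    (hH : ∀ x : R, span {x} ≠ ⊤ → HasNOAFactorization n (span {x}))
    (hm : maximalIdeal R ∉ minimalPrimes R) {y : R} (hy : ∀ Q ∈ minimalPrimes R, y ∉ Q)
    (hq : (span {y} ⊔ nilradical R).IsPrime)
    (hqm : span {y} ⊔ nilradical R ≠ maximalIdeal R) (hN : (nilradical R).IsPrime) :
    nilradical R = ⊥ := by
  have hNmin : nilradical R ∈ minimalPrimes R :=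
    ⟨⟨hN, bot_le⟩, fun J hJ _ => @nilradical_le_prime _ _ J hJ.1⟩
  have hyq : y ∈ span {y} ⊔ nilradical R := mem_sup_left (mem_span_singleton_self y)
  obtain ⟨J, K, hJ, hJK, hJq⟩ := exists_isNOAIdeal_mul_eq_span_singleton_le hH
    (fun hu => hq.ne_top (eq_top_of_isUnit_mem _ hyq hu)) hq hyq
  have hJp := hJ.isPrime_of_mul_eq_span_singleton hn hy hq hqm hy hJK
  have hJeq : J = span {y} ⊔ nilradical R :=
    le_antisymm hJq (sup_le (hJK ▸ mul_le_left) (nilradical_le_prime J))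
  have hK : K = ⊤ := by
    by_contra hK
    refine notMem_nilradical_of_forall_notMem_minimalPrimes hy
      (mem_of_mem_maximalIdeal_mul_span_singleton_sup ?_)
    have hy' : y ∈ J * maximalIdeal R :=
      mul_mono_right (le_maximalIdeal hK) (hJK ▸ mem_span_singleton_self y)
    rw [hJeq, Ideal.sup_mul, mul_comm] at hy'
    exact sup_le_sup_left (mul_le_left : nilradical R * maximalIdeal R ≤ _) _ hy'
  have hNy : nilradical R ≤ span {y} * nilradical R := fun η hη => by
    have hηy : η ∈ span {y} := by
      rw [← hJK, hK, mul_top, hJeq]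
      exact mem_sup_right hη
    obtain ⟨c, rfl⟩ := mem_span_singleton'.mp hηy
    exact mem_span_singleton_mul.mpr
      ⟨c, mem_nilradical_of_mul_mem hy (by rwa [mul_comm]), mul_comm y c⟩
  refine eq_bot_iff.mpr fun η hη => ?_
  obtain ⟨J', K', hJ', hJK', hJ'N⟩ := exists_isNOAIdeal_mul_eq_span_singleton_le hH
    (fun hu => hN.ne_top (eq_top_of_isUnit_mem _ hη hu)) hN hη
  obtain rfl := hJ'.eq_of_le_of_mem_minimalPrimes hn hm hNmin hJ'N
  have hηy : η ∈ span {y} * span {η} := by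
    rw [← hJK', ← mul_assoc]
    exact mul_mono_left hNy (by rw [hJK']; exact mem_span_singleton_self η)
  refine mem_of_mem_maximalIdeal_mul_span_singleton_sup (mem_sup_left ?_)
  exact mul_mono_left ((span_singleton_le_iff_mem _).mpr (le_maximalIdeal hq.ne_top hyq)) hηy

theorem uniqueFactorizationMonoid_of_isDomain [IsDomain R] (hn : 0 < n)
    (hH : ∀ x : R, span {x} ≠ ⊤ → HasNOAFactorization n (span {x})) {y : R}
    (hy : ∀ Q ∈ minimalPrimes R, y ∉ Q) (hq : (span {y} ⊔ nilradical R).IsPrime)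
    (hqm : span {y} ⊔ nilradical R ≠ maximalIdeal R) : UniqueFactorizationMonoid R := by
  refine UniqueFactorizationMonoid.iff_exists_prime_mem_of_isPrime.mpr fun P hP0 hP => ?_
  obtain ⟨x, hxP, hx0⟩ := Submodule.exists_mem_ne_zero_of_ne_bot hP0
  have hx : ∀ Q ∈ minimalPrimes R, x ∉ Q := fun Q hQ hxQ =>
    hx0 ((Submodule.mem_bot R).mp (hQ.2 ⟨isPrime_bot, le_rfl⟩ bot_le hxQ))
  obtain ⟨J, K, hJ, hJK, hJP⟩ := exists_isNOAIdeal_mul_eq_span_singleton_le hH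
    (fun hu => hP.ne_top (eq_top_of_isUnit_mem P hxP hu)) hP hxP
  have hJp := hJ.isPrime_of_mul_eq_span_singleton hn hy hq hqm hx hJK
  obtain ⟨a, haJ, ⟨b, rfl⟩, hJa⟩ :=
    exists_dvd_le_span_singleton_sup_nilradical_of_forall_notMem hx hJK
  rw [nilradical_eq_zero, Submodule.zero_eq_bot, sup_bot_eq] at hJa
  have hJeq : J = span {a} := le_antisymm hJa ((span_singleton_le_iff_mem J).mpr haJ)
  exact ⟨a, hJP haJ, (span_singleton_prime (left_ne_zero_of_mul hx0)).mp (hJeq ▸ hJp)⟩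

end IsLocalRing

end

theorem stmt8 {R : Type*} [CommRing R] [IsLocalRing R] (n : ℕ) (hn : 0 < n)
    (h : ∀ x : R, Ideal.span {x} ≠ ⊤ → HasNOAFactorization n (Ideal.span {x}))
    (hdim : 2 ≤ ringKrullDim R) :
    ∃ _ : IsDomain R, UniqueFactorizationMonoid R := by
  obtain ⟨p, hp, hpmin, hpm⟩ := exists_isPrime_notMem_minimalPrimes_ne_maximalIdeal hdim
  have hm := IsLocalRing.maximalIdeal_notMem_minimalPrimes_of_ne hp hpm
  obtain ⟨y, hy, hq, hqm⟩ := exists_span_singleton_sup_nilradical_isPrime hn h hm hp hpmin hpm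
  have hN := nilradical_isPrime hn h hm hy hq hqm
  have hbot : (⊥ : Ideal R).IsPrime := nilradical_eq_bot hn h hm hy hq hqm hN ▸ hN
  have := IsDomain.of_bot_isPrime R
  exact ⟨this, uniqueFactorizationMonoid_of_isDomain hn h hy hq hqm⟩
end

section
/- For a commutative ring R and positive integer n, the formal power series ring R[[X]] is an n-OAF ring if and only if R is isomorphic to a finite direct product of fields. -/
/-! An `n`-OA ideal that is not prime absorbs every product of `n` nonunits, so it contains `M ^ n`
for each ideal `M` of nonunits; in a ring that is not local, `u + v = 1` with nonunits `u, v` then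
puts `1 = (u + v) ^ (2n - 1)` in it, so every `n`-OA ideal is prime. In `R⟦X⟧`, `X ∈ I * J` puts
the coefficient `1` of `X` into the sum of the ideals of constant terms of `I` and `J`, so the
factors of an ideal containing `X` are pairwise comaximal.

If `R` is not local, factoring `a + (X)` writes every ideal `a` of `R` as an intersection of
finitely many pairwise comaximal primes. So every ideal is radical, hence every prime is maximal,
and the Chinese remainder theorem for `0` gives `R ≅ ∏ R ⧸ Pᵢ`.

If `R` is local with maximal ideal `𝔪`, the factorization of `a + (X)` has a single factor, so
every ideal `a` is prime or contains `𝔪 ^ n`; applied to `a = z𝔪` this gives `𝔪 ^ n = 0`. For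
`r ∈ 𝔪`, every factor of `(r, X ^ n²) = K₁ ⋯ Kₘ` contains `𝔐 ^ n`, where `𝔐 = 𝔪 + (X)`, so
`X ^ nm ∈ (r, X ^ n²)` and `m ≥ n`; as each `Kᵢ ⊆ 𝔐`, then `r ∈ 𝔪 ^ m = 0`.

Conversely, `(∏ Fᵢ)⟦X⟧ ≅ ∏ Fᵢ⟦X⟧` is a finite product of discrete valuation rings, in which every
ideal is a product of primes, and primes are `n`-OA. -/

open PowerSeries IsLocalRing

universe u

section NOA

variable {S : Type*} [CommRing S] {n : ℕ} {K : Ideal S}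

theorem Ideal.IsPrime.isNOAIdeal_s16 {P : Ideal S} (hP : P.IsPrime) : IsNOAIdeal n P := by
  refine ⟨hP.ne_top, fun a _ ha => ?_⟩
  obtain ⟨i, -, hi⟩ := hP.prod_mem_iff.mp ha
  induction i using Fin.lastCases with
  | last => exact Or.inr hi
  | cast j => exact Or.inl (hP.prod_mem_iff.mpr ⟨j, Finset.mem_univ j, hi⟩)

theorem IsNOAIdeal.prod_mem_or_mem_s16 (hK : IsNOAIdeal n K) {x : Fin n → S} {c : S}
    (hx : ∀ i, ¬IsUnit (x i)) (hc : ¬IsUnit c) (h : (∏ i, x i) * c ∈ K) :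
    ∏ i, x i ∈ K ∨ c ∈ K := by
  set a : Fin (n + 1) → S := Fin.snoc x c with ha_def
  have ha : ∀ i, ¬IsUnit (a i) := fun i => by
    induction i using Fin.lastCases with
    | last => simpa [ha_def] using hc
    | cast j => simpa [ha_def] using hx j
  simpa [ha_def] using hK.2 a ha (by simpa [ha_def, Fin.prod_univ_castSucc] using h)

theorem IsNOAIdeal.prod_mem_of_not_isPrime_s16 (hK : IsNOAIdeal n K) (hn : 0 < n)
    (hp : ¬K.IsPrime) {x : Fin n → S} (hx : ∀ i, ¬IsUnit (x i)) : ∏ i, x i ∈ K := by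
  obtain ⟨a, b, hab, ha, hb⟩ : ∃ a b, a * b ∈ K ∧ a ∉ K ∧ b ∉ K := by
    by_contra! h
    exact hp ⟨hK.1, fun {a b} hab => or_iff_not_imp_left.mpr (h a b hab)⟩
  have hau : ¬IsUnit a := fun hu => hb ((K.unit_mul_mem_iff_mem hu).mp hab)
  have hbu : ¬IsUnit b := fun hu => ha ((K.unit_mul_mem_iff_mem hu).mp (mul_comm a b ▸ hab))
  -- `(∏ x) * a * b ∈ K` with `a` absorbed into the first factor: strip `b`, then `a`
  set y := x * Pi.mulSingle ⟨0, hn⟩ a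
  have hy : ∀ i, ¬IsUnit (y i) := fun i hu => hx i (isUnit_of_mul_isUnit_left hu)
  have hprod : ∏ i, y i = (∏ i, x i) * a := by simp [y, Finset.prod_mul_distrib]
  have hya := (hK.prod_mem_or_mem_s16 hy hbu
    (by rw [hprod, mul_assoc]; exact K.mul_mem_left _ hab)).resolve_right hb
  exact (hK.prod_mem_or_mem_s16 hx hau (hprod ▸ hya)).resolve_right ha

theorem IsNOAIdeal.pow_le_of_not_isPrime (hK : IsNOAIdeal n K) (hn : 0 < n) (hp : ¬K.IsPrime)
    {M : Ideal S} (hM : ∀ x ∈ M, ¬IsUnit x) : M ^ n ≤ K := by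
  rw [Submodule.pow_eq_span_pow_set, Submodule.span_le]
  intro y hy
  obtain ⟨f, rfl⟩ := Set.mem_pow.mp hy
  rw [List.prod_ofFn]
  exact hK.prod_mem_of_not_isPrime_s16 hn hp fun i => hM _ (f i).2

theorem IsNOAIdeal.isPrime_or_pow_le [IsLocalRing S] (hK : IsNOAIdeal n K) (hn : 0 < n) :
    K.IsPrime ∨ maximalIdeal S ^ n ≤ K :=
  or_iff_not_imp_left.mpr fun hp =>
    hK.pow_le_of_not_isPrime hn hp fun x hx => (mem_maximalIdeal x).mp hx

theorem IsNOAIdeal.isPrime_of_not_isLocalRing [Nontrivial S] (hS : ¬IsLocalRing S)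
    (hK : IsNOAIdeal n K) (hn : 0 < n) : K.IsPrime := by
  obtain ⟨a, ha, ha'⟩ : ∃ a : S, ¬IsUnit a ∧ ¬IsUnit (1 - a) := by
    by_contra! h
    exact hS (.of_isUnit_or_isUnit_one_sub_self fun a => or_iff_not_imp_left.mpr (h a))
  by_contra hp
  have hpow : ∀ w : S, ¬IsUnit w → w ^ n ∈ K := fun w hw => by
    simpa using hK.prod_mem_of_not_isPrime_s16 hn hp (x := fun _ => w) fun _ => hw
  have := K.add_pow_add_pred_mem_of_pow_mem (hpow a ha) (hpow _ ha')
  rw [add_sub_cancel, one_pow] at this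
  exact hK.1 ((Ideal.eq_top_iff_one K).mpr this)

end NOA

theorem Ideal.IsPrime.isMaximal_of_forall_isRadical {R : Type*} [CommRing R]
    (h : ∀ I : Ideal R, I.IsRadical) {P : Ideal R} (hP : P.IsPrime) : P.IsMaximal := by
  refine Ideal.Quotient.maximal_of_isField P ⟨exists_pair_ne _, mul_comm, fun {x} hx => ?_⟩
  obtain ⟨r, rfl⟩ := Ideal.Quotient.mk_surjective x
  obtain ⟨c, hc⟩ := Ideal.mem_span_singleton'.mp
    (h (Ideal.span {r ^ 2}) ⟨2, Ideal.mem_span_singleton_self _⟩)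
  refine ⟨Ideal.Quotient.mk P c, ?_⟩
  have h0 : Ideal.Quotient.mk P (r * (r * c - 1)) = 0 := by
    rw [show r * (r * c - 1) = 0 by linear_combination hc, map_zero]
  rw [map_mul, map_sub, map_mul, map_one] at h0
  exact sub_eq_zero.mp ((mul_eq_zero.mp h0).resolve_left hx)

namespace PowerSeries

variable {R : Type*} [CommRing R]

theorem comap_constantCoeff_comap_C {I : Ideal R⟦X⟧} (hX : X ∈ I) :
    (I.comap C).comap constantCoeff = I := by
  ext f
  obtain ⟨g, hg⟩ : X ∣ f - C (constantCoeff f) := X_dvd_iff.mpr (by simp)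
  have hf : f - C (constantCoeff f) ∈ I := hg ▸ I.mul_mem_right g hX
  simp only [Ideal.mem_comap]
  exact ⟨fun h => by simpa using I.add_mem hf h, fun h => by simpa using I.sub_mem h hf⟩

theorem coeff_one_mem_of_mem_mul {I J : Ideal R⟦X⟧} {f : R⟦X⟧} (hf : f ∈ I * J) :
    coeff 1 f ∈ I.map constantCoeff ⊔ J.map constantCoeff := by
  refine Submodule.mul_induction_on hf (fun g hg h hh => ?_) (fun g h hg hh => ?_)
  · have hco : coeff 1 (g * h) = constantCoeff g * coeff 1 h + coeff 1 g * constantCoeff h := by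
      simp [coeff_mul, Finset.Nat.sum_antidiagonal_succ]
    rw [hco]
    exact Ideal.add_mem _
      (Ideal.mem_sup_left (Ideal.mul_mem_right _ _ (Ideal.mem_map_of_mem _ hg)))
      (Ideal.mem_sup_right (Ideal.mul_mem_left _ _ (Ideal.mem_map_of_mem _ hh)))
  · rw [map_add]
    exact Ideal.add_mem _ hg hh

theorem sup_eq_top_of_X_mem_mul {I J : Ideal R⟦X⟧} (h : X ∈ I * J) : I ⊔ J = ⊤ := by
  have h1 : (1 : R) ∈ (I ⊔ J).map constantCoeff := by
    simpa [Ideal.map_sup] using coeff_one_mem_of_mem_mul h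
  rw [← comap_constantCoeff_comap_C (Ideal.mul_le_inf.trans inf_le_sup h)] at h1 ⊢
  rw [Ideal.map_comap_of_surjective _ constantCoeff_surj, ← Ideal.eq_top_iff_one] at h1
  rw [h1, Ideal.comap_top]

theorem pairwise_isCoprime_of_X_mem_prod {ι : Type*} [Fintype ι] {K : ι → Ideal R⟦X⟧}
    (h : X ∈ ∏ i, K i) : Pairwise fun i j => IsCoprime (K i) (K j) := by
  classical
  intro i j hij
  rw [Ideal.isCoprime_iff_sup_eq]
  refine sup_eq_top_of_X_mem_mul ((?_ : ∏ i, K i ≤ K i * K j) h)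
  rw [Fintype.prod_eq_mul_prod_compl i]
  exact Ideal.mul_mono_right (Ideal.prod_le_inf.trans (Finset.inf_le (by simpa using hij.symm)))

theorem le_of_X_pow_mem_span {r : R} (hr : ¬IsUnit r) {k N : ℕ}
    (h : X ^ k ∈ Ideal.span {C r, X ^ N}) : N ≤ k := by
  by_contra! hk
  obtain ⟨a, b, hab⟩ := Ideal.mem_span_pair.mp h
  have := congrArg (coeff k) hab
  rw [map_add, coeff_mul_C, coeff_mul_X_pow', if_neg hk.not_ge, add_zero, coeff_X_pow_self] at this
  exact hr (IsUnit.of_mul_eq_one_right _ this)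

noncomputable def ringEquivPi {ι : Type*} {S : ι → Type*} [∀ i, CommRing (S i)]
    (e : R ≃+* Π i, S i) : R⟦X⟧ ≃+* Π i, (S i)⟦X⟧ :=
  RingEquiv.ofBijective (RingHom.pi fun i => map ((Pi.evalRingHom S i).comp e))
    ⟨fun f g hfg => ext fun k => e.injective <| funext fun i => by
        simpa using congrArg (coeff k) (congrFun hfg i),
      fun g => ⟨mk fun k => e.symm fun i => coeff k (g i), funext fun i => ext fun k => by simp⟩⟩

variable [IsLocalRing R]

theorem maximalIdeal_eq_comap : maximalIdeal R⟦X⟧ = (maximalIdeal R).comap constantCoeff := by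
  ext f
  simp [mem_maximalIdeal, mem_nonunits_iff, isUnit_iff_constantCoeff]

theorem map_constantCoeff_maximalIdeal :
    (maximalIdeal R⟦X⟧).map constantCoeff = maximalIdeal R := by
  rw [maximalIdeal_eq_comap, Ideal.map_comap_of_surjective _ constantCoeff_surj]

theorem map_C_maximalIdeal_le : (maximalIdeal R).map C ≤ maximalIdeal R⟦X⟧ := by
  rw [Ideal.map_le_iff_le_comap, maximalIdeal_eq_comap, Ideal.comap_comap, constantCoeff_comp_C,
    Ideal.comap_id]

end PowerSeries

section LocalCase

variable {R : Type*} [CommRing R] [IsLocalRing R] {n : ℕ}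

theorem isPrime_or_pow_le_of_isNOAFRing_powerSeries (hn : 0 < n)
    (h : IsNOAFRing R⟦X⟧ n) {a : Ideal R} (ha : a ≠ ⊤) :
    a.IsPrime ∨ maximalIdeal R ^ n ≤ a := by
  obtain ⟨m, K, hm, hK, hIK⟩ := h _ (Ideal.comap_ne_top constantCoeff ha)
  have hX : X ∈ ∏ i, K i := hIK ▸ by simp
  -- the factors are comaximal, which is impossible for two proper ideals of a local ring
  obtain rfl : m = 1 := by
    by_contra hm1
    have hm2 : 1 < m := by omega
    have hco := pairwise_isCoprime_of_X_mem_prod hX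
      (show (⟨0, hm⟩ : Fin m) ≠ ⟨1, hm2⟩ by simp)
    have hle := sup_le (le_maximalIdeal (hK ⟨0, hm⟩).1) (le_maximalIdeal (hK ⟨1, hm2⟩).1)
    rw [Ideal.isCoprime_iff_sup_eq.mp hco, top_le_iff] at hle
    exact (maximalIdeal.isMaximal R⟦X⟧).ne_top hle
  rw [Fin.prod_univ_one] at hIK
  have ha_eq : a = (K 0).comap C := by
    rw [← hIK, Ideal.comap_comap, constantCoeff_comp_C, Ideal.comap_id]
  rw [ha_eq]
  refine ((hK 0).isPrime_or_pow_le hn).imp (fun hP => hP.comap C) fun hle => ?_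
  rw [← Ideal.map_le_iff_le_comap, Ideal.map_pow]
  exact (Ideal.pow_right_mono map_C_maximalIdeal_le n).trans hle

theorem maximalIdeal_pow_eq_bot_of_isNOAFRing_powerSeries (hn : 0 < n)
    (h : IsNOAFRing R⟦X⟧ n) : maximalIdeal R ^ n = ⊥ := by
  refine eq_bot_iff.mpr fun z hz => ?_
  have hzm : z ∈ maximalIdeal R := Ideal.pow_le_self hn.ne' hz
  have hza : z ∈ Ideal.span {z} * maximalIdeal R := by
    rcases isPrime_or_pow_le_of_isNOAFRing_powerSeries hn h (a := Ideal.span {z} * maximalIdeal R)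
      (ne_top_of_le_ne_top (maximalIdeal.isMaximal R).ne_top Ideal.mul_le_right) with hP | hP
    · rcases hP.mul_le.mp le_rfl with hle | hle
      · exact hle (Ideal.mem_span_singleton_self z)
      · exact hle hzm
    · exact hP hz
  obtain ⟨w, hw, hzw⟩ := Ideal.mem_span_singleton_mul.mp hza
  have hunit : IsUnit (1 - w) := isUnit_one_sub_self_of_mem_nonunits w hw
  rw [Submodule.mem_bot, ← hunit.mul_left_eq_zero, mul_sub, mul_one, hzw, sub_self]

theorem isField_of_isNOAFRing_powerSeries (hn : 0 < n) (h : IsNOAFRing R⟦X⟧ n) : IsField R := by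
  have hpn := maximalIdeal_pow_eq_bot_of_isNOAFRing_powerSeries hn h
  rw [isField_iff_maximalIdeal_eq, ← hpn]
  refine le_antisymm (fun r hr => ?_) (Ideal.pow_le_self hn.ne')
  set I : Ideal R⟦X⟧ := Ideal.span {C r, X ^ (n * n)}
  have hIM : I ≤ maximalIdeal R⟦X⟧ := by
    rw [Ideal.span_le, Set.insert_subset_iff, Set.singleton_subset_iff, maximalIdeal_eq_comap]
    simp [hr, Nat.pos_iff_ne_zero.mp (Nat.mul_pos hn hn)]
  obtain ⟨m, K, -, hK, hIK⟩ := h I (ne_top_of_le_ne_top (maximalIdeal.isMaximal _).ne_top hIM)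
  have hKM : ∀ j, maximalIdeal R⟦X⟧ ^ n ≤ K j := by
    intro j
    have hIK' : I ≤ K j := hIK ▸ Ideal.prod_le_inf.trans (Finset.inf_le (Finset.mem_univ j))
    refine ((hK j).isPrime_or_pow_le hn).elim (fun hP => ?_) id
    -- a prime factor contains `X` and the nilpotents `C z`, hence the maximal ideal
    have hX : X ∈ K j := hP.mem_of_pow_mem (n * n) (hIK' (Ideal.subset_span (by simp)))
    refine (Ideal.pow_le_self hn.ne').trans ?_
    rw [maximalIdeal_eq_comap, ← comap_constantCoeff_comap_C hX]
    refine Ideal.comap_mono fun z hz => hP.mem_of_pow_mem n ?_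
    have hzn : z ^ n = 0 := by simpa [hpn] using Ideal.pow_mem_pow hz n
    simp [← map_pow, hzn]
  have hle_prod : (maximalIdeal R⟦X⟧ ^ n) ^ m ≤ ∏ j, K j := by
    simpa using Finset.pow_card_le_prod Finset.univ K _ fun j _ => hKM j
  have hprod_le : ∏ j, K j ≤ maximalIdeal R⟦X⟧ ^ m := by
    simpa using Finset.prod_le_pow_card Finset.univ K _ fun j _ => le_maximalIdeal (hK j).1
  have hnm : n * n ≤ n * m := by
    refine le_of_X_pow_mem_span ((mem_maximalIdeal r).mp hr)
      (hIK.symm ▸ hle_prod ?_ : X ^ (n * m) ∈ I)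
    rw [pow_mul]
    exact Ideal.pow_mem_pow (Ideal.pow_mem_pow (by simp [maximalIdeal_eq_comap]) n) m
  have hrm : r ∈ maximalIdeal R ^ m := by
    have hCr : C r ∈ maximalIdeal R⟦X⟧ ^ m := hprod_le (hIK ▸ Ideal.subset_span (by simp))
    rw [← map_constantCoeff_maximalIdeal, ← Ideal.map_pow]
    simpa using Ideal.mem_map_of_mem constantCoeff hCr
  exact Ideal.pow_le_pow_right (Nat.le_of_mul_le_mul_left hnm hn) hrm

end LocalCase

section NonLocalCase

variable {R : Type u} [CommRing R] [Nontrivial R] {n : ℕ}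

theorem exists_isPrime_pairwise_isCoprime_iInf_eq_of_isNOAFRing_powerSeries (hn : 0 < n)
    (h : IsNOAFRing R⟦X⟧ n) (hR : ¬IsLocalRing R) {a : Ideal R} (ha : a ≠ ⊤) :
    ∃ (m : ℕ) (P : Fin m → Ideal R), (∀ i, (P i).IsPrime) ∧
      (Pairwise fun i j => IsCoprime (P i) (P j)) ∧ ⨅ i, P i = a := by
  obtain ⟨m, K, -, hK, hIK⟩ := h _ (Ideal.comap_ne_top constantCoeff ha)
  have hX : X ∈ ∏ i, K i := hIK ▸ by simp
  have hKP : ∀ i, ((K i).comap C).comap constantCoeff = K i := fun i =>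
    comap_constantCoeff_comap_C (Ideal.prod_le_inf.trans (Finset.inf_le (Finset.mem_univ i)) hX)
  have hco := pairwise_isCoprime_of_X_mem_prod hX
  have hRX : ¬IsLocalRing R⟦X⟧ := fun _ => hR (.of_surjective' constantCoeff constantCoeff_surj)
  refine ⟨m, fun i => (K i).comap C, fun i => ((hK i).isPrime_of_not_isLocalRing hRX hn).comap C,
    fun i j hij => ?_, ?_⟩
  · have := (hco hij).map (Ideal.mapHom constantCoeff)
    rwa [Ideal.mapHom_apply, Ideal.mapHom_apply, ← hKP i, ← hKP j,
      Ideal.map_comap_of_surjective _ constantCoeff_surj,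
      Ideal.map_comap_of_surjective _ constantCoeff_surj] at this
  · have hinf : ⨅ i, K i = ∏ i, K i := by
      simpa using (Ideal.prod_eq_iInf_of_pairwise_isCoprime (s := Finset.univ)
        fun i _ j _ hij => hco hij).symm
    rw [← Ideal.comap_iInf, hinf, ← hIK, Ideal.comap_comap, constantCoeff_comp_C, Ideal.comap_id]

theorem isRadical_of_isNOAFRing_powerSeries (hn : 0 < n) (h : IsNOAFRing R⟦X⟧ n)
    (hR : ¬IsLocalRing R) (a : Ideal R) : a.IsRadical := by
  by_cases ha : a = ⊤
  · exact ha ▸ le_top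
  obtain ⟨m, P, hP, -, rfl⟩ :=
    exists_isPrime_pairwise_isCoprime_iInf_eq_of_isNOAFRing_powerSeries hn h hR ha
  exact Ideal.isRadical_iInf _ fun i => (hP i).isRadical

theorem exists_ringEquiv_pi_field_of_isNOAFRing_powerSeries (hn : 0 < n)
    (h : IsNOAFRing R⟦X⟧ n) (hR : ¬IsLocalRing R) :
    ∃ (m : ℕ) (F : Fin m → Type u) (_ : ∀ i, Field (F i)), Nonempty (R ≃+* Π i, F i) := by
  obtain ⟨m, P, hP, hco, hbot⟩ :=
    exists_isPrime_pairwise_isCoprime_iInf_eq_of_isNOAFRing_powerSeries hn h hR bot_ne_top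
  have hmax : ∀ i, (P i).IsMaximal := fun i =>
    (hP i).isMaximal_of_forall_isRadical (isRadical_of_isNOAFRing_powerSeries hn h hR)
  exact ⟨m, fun i => R ⧸ P i, fun i => have := hmax i; Ideal.Quotient.field (P i),
    ⟨(RingEquiv.quotientBot R).symm.trans
      ((Ideal.quotEquivOfEq hbot.symm).trans (Ideal.quotientInfRingEquivPiQuotient P hco))⟩⟩

end NonLocalCase

section PrimeProducts

theorem Submonoid.apply_mem_closure_of_mapsTo {M N : Type*} [Monoid M] [Monoid N] (f : M →* N)
    {s : Set M} {t : Set N} (hst : Set.MapsTo f s t) {x : M} (hx : x ∈ closure s) :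
    f x ∈ closure t :=
  (closure_le (S := (closure t).comap f)).mpr (fun _ hy => subset_closure (hst hy)) hx

theorem isNOAFRing_of_forall_mem_closure_isPrime {S : Type*} [CommRing S] {n : ℕ}
    (h : ∀ I : Ideal S, I ∈ Submonoid.closure {P | P.IsPrime}) : IsNOAFRing S n := by
  intro I hI
  obtain ⟨L, hL, rfl⟩ := Submonoid.exists_list_of_mem_closure (h I)
  refine ⟨L.length, L.get, List.length_pos_iff.mpr ?_, fun i => (hL _ (L.get_mem i)).isNOAIdeal_s16,
    by rw [← List.prod_ofFn, List.ofFn_get]⟩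
  rintro rfl
  exact hI (by simp [Ideal.one_eq_top])

theorem IsDiscreteValuationRing.mem_closure_isPrime {S : Type*} [CommRing S] [IsDomain S]
    [IsDiscreteValuationRing S] (I : Ideal S) : I ∈ Submonoid.closure {P | P.IsPrime} := by
  by_cases hI : I = ⊥
  · exact Submonoid.subset_closure (hI ▸ Ideal.isPrime_bot)
  obtain ⟨ϖ, hϖ⟩ := exists_irreducible S
  obtain ⟨k, rfl⟩ := ideal_eq_span_pow_irreducible hI hϖ
  rw [← Ideal.span_singleton_pow]
  exact Submonoid.pow_mem _
    (Submonoid.subset_closure ((Ideal.span_singleton_prime hϖ.ne_zero).mpr hϖ.prime)) k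

theorem RingEquiv.mem_closure_isPrime {S T : Type*} [CommRing S] [CommRing T] (e : S ≃+* T)
    (h : ∀ I : Ideal S, I ∈ Submonoid.closure {P | P.IsPrime}) (J : Ideal T) :
    J ∈ Submonoid.closure {P | P.IsPrime} := by
  rw [← Ideal.map_comap_of_surjective _ e.surjective J]
  refine Submonoid.apply_mem_closure_of_mapsTo (Ideal.mapHom e : Ideal S →* Ideal T)
    (fun P (hP : P.IsPrime) => ?_) (h _)
  exact Ideal.map_isPrime_of_equiv e

namespace Ideal

variable {ι : Type*} {R : ι → Type*} [∀ i, CommRing (R i)]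

theorem pi_map_evalRingHom [Finite ι] (I : Ideal (Π i, R i)) :
    pi (fun i => I.map (Pi.evalRingHom R i)) = I :=
  piOrderIso.symm_apply_apply I

theorem pi_mul [Finite ι] (I J : Π i, Ideal (R i)) : pi (I * J) = pi I * pi J := by
  conv_rhs => rw [← pi_map_evalRingHom (pi I * pi J)]
  simp only [Ideal.map_mul, map_evalRingHom_pi]
  rfl

theorem pi_one : pi (1 : Π i, Ideal (R i)) = 1 := by
  ext
  simp [mem_pi, one_eq_top]

def piHom [Finite ι] : (Π i, Ideal (R i)) →* Ideal (Π i, R i) where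
  toFun := pi
  map_one' := pi_one
  map_mul' := pi_mul

theorem pi_mulSingle [DecidableEq ι] (i : ι) (P : Ideal (R i)) :
    pi (Pi.mulSingle i P) = P.comap (Pi.evalRingHom R i) := by
  ext x
  refine ⟨fun hx => by simpa using hx i, fun hx j => ?_⟩
  obtain rfl | hj := eq_or_ne j i
  · simpa using hx
  · simp [Pi.mulSingle_eq_of_ne hj, one_eq_top]

theorem mem_closure_isPrime_pi [Finite ι]
    (h : ∀ i (I : Ideal (R i)), I ∈ Submonoid.closure {P | P.IsPrime}) (I : Ideal (Π i, R i)) :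
    I ∈ Submonoid.closure {P | P.IsPrime} := by
  classical
  have := Fintype.ofFinite ι
  rw [← pi_map_evalRingHom I, ← Finset.univ_prod_mulSingle fun i => I.map (Pi.evalRingHom R i)]
  change piHom _ ∈ _
  rw [map_prod]
  refine Submonoid.prod_mem _ fun i _ => Submonoid.apply_mem_closure_of_mapsTo
    (piHom.comp (MonoidHom.mulSingle (fun i => Ideal (R i)) i)) (fun P (hP : P.IsPrime) => ?_)
    (h i _)
  change (pi (Pi.mulSingle i P)).IsPrime
  rw [pi_mulSingle]
  exact comap_isPrime _ P

end Ideal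

theorem isNOAFRing_powerSeries_of_ringEquiv_pi {R : Type*} [CommRing R] {n : ℕ} {ι : Type*}
    [Finite ι] {F : ι → Type*} [∀ i, Field (F i)] (e : R ≃+* Π i, F i) :
    IsNOAFRing R⟦X⟧ n :=
  isNOAFRing_of_forall_mem_closure_isPrime <| (ringEquivPi e).symm.mem_closure_isPrime <|
    Ideal.mem_closure_isPrime_pi fun _ => IsDiscreteValuationRing.mem_closure_isPrime

end PrimeProducts

theorem stmt16 {R : Type u} [CommRing R] [Nontrivial R] (n : ℕ) (hn : 0 < n) :
    IsNOAFRing (PowerSeries R) n ↔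
      ∃ (m : ℕ) (F : Fin m → Type u) (_ : ∀ i, Field (F i)),
        Nonempty (R ≃+* ((i : Fin m) → F i)) := by
  refine ⟨fun h => ?_, fun ⟨m, F, _, ⟨e⟩⟩ => isNOAFRing_powerSeries_of_ringEquiv_pi e⟩
  by_cases hR : IsLocalRing R
  · exact ⟨1, fun _ => R, fun _ => (isField_of_isNOAFRing_powerSeries hn h).toField,
      ⟨(RingEquiv.piUnique fun _ : Fin 1 => R).symm⟩⟩
  · exact exists_ringEquiv_pi_field_of_isNOAFRing_powerSeries hn h hR
end
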